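/- arXiv:math/0311481 — 2 statements merged into one kernel-verified Lean document; each statement's English description precedes it below -/
import Mathlib

section
/- There is an absolute constant C > 0 such that for every dimension d ≥ 1, every n ≥ 1, every family of points v_1, …, v_n ∈ [0,1]^d, and every minimal spanning tree T over v_1, …, v_n, one has Σ_{{i,j} ∈ E(T)} ‖v_i − v_j‖^d ≤ (C·√d)^d; that is, in the critical case α = d the constant C(d) can be taken to be C·√d with C independent of d. -/
/-- The `α`-energy of a graph `T` on vertex set `Fin n`, with vertex `i` placed at
`v i` in the metric space `X`: the sum over the edges `{i,j}` of `T` of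
`dist (v i) (v j) ^ α`. -/
noncomputable def energy {X : Type*} [MetricSpace X] {n : ℕ} (v : Fin n → X)
    (T : SimpleGraph (Fin n)) (α : ℝ) : ℝ :=
  ∑ e ∈ T.edgeSet.toFinite.toFinset,
    Sym2.lift ⟨fun i j => dist (v i) (v j) ^ α, fun i j => by simp only [dist_comm]⟩ e

/-- `T` is a minimal spanning tree over the points `v 0, …, v (n-1)`: it is a tree on
the vertex set `Fin n` minimizing the total edge length `E₁` among all such trees. -/
def IsMST {X : Type*} [MetricSpace X] {n : ℕ} (v : Fin n → X)
    (T : SimpleGraph (Fin n)) : Prop :=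
  T.IsTree ∧ ∀ T' : SimpleGraph (Fin n), T'.IsTree → energy v T 1 ≤ energy v T' 1

/-!
Exchanging an edge `ab` of a minimal spanning tree for any edge across the cut it defines cannot
shorten the tree (the cut property), so both ends of any other tree edge are at least `|ab|` away
from one endpoint of `ab`. By Apollonius' theorem the midpoints of two distinct tree edges `e`, `f`
are then at distance at least `(|e| + |f|) / 6`. Since the Euclidean norm is at most `√d` times the
sup norm, the sup-norm cubes of half-side `|e| / (6 √d)` around the midpoints are pairwise
disjoint; they lie in `[-1/6, 7/6]^d`, so comparing volumes gives
`∑ (|e| / (3 √d))^d ≤ (4/3)^d`, i.e. `∑ |e|^d ≤ (4 √d)^d`.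
-/

open Finset MeasureTheory

namespace SimpleGraph

variable {V : Type*} {T : SimpleGraph V} {a b c : V}

lemma Walk.reachable_deleteEdges_left_or_right {x y : V} (p : T.Walk x y)
    (hy : (T.deleteEdges {s(a, b)}).Reachable y a ∨ (T.deleteEdges {s(a, b)}).Reachable y b) :
    (T.deleteEdges {s(a, b)}).Reachable x a ∨ (T.deleteEdges {s(a, b)}).Reachable x b := by
  induction p with
  | nil => exact hy
  | @cons x z _ hxz _ ih =>
    by_cases he : s(x, z) = s(a, b)
    · rcases Sym2.eq_iff.mp he with ⟨rfl, -⟩ | ⟨rfl, -⟩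
      · exact .inl .rfl
      · exact .inr .rfl
    · have hxz' : (T.deleteEdges {s(a, b)}).Adj x z := by simp [hxz, he]
      exact (ih hy).imp hxz'.reachable.trans hxz'.reachable.trans

lemma Connected.reachable_deleteEdges_left_or_right (hT : T.Connected) (x : V) :
    (T.deleteEdges {s(a, b)}).Reachable x a ∨ (T.deleteEdges {s(a, b)}).Reachable x b :=
  (hT.preconnected x a).some.reachable_deleteEdges_left_or_right (.inl .rfl)

lemma IsAcyclic.not_reachable_deleteEdges (hT : T.IsAcyclic) (hab : T.Adj a b)
    (hc : (T.deleteEdges {s(a, b)}).Reachable c a) :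
    ¬ (T.deleteEdges {s(a, b)}).Reachable b c :=
  fun hbc => isBridge_iff.mp (isAcyclic_iff_forall_adj_isBridge.mp hT hab) (hc.symm.trans hbc.symm)

lemma IsTree.deleteEdges_sup_edge (hT : T.IsTree) (hab : T.Adj a b)
    (hc : (T.deleteEdges {s(a, b)}).Reachable c a) :
    (T.deleteEdges {s(a, b)} ⊔ edge b c).IsTree := by
  have hbc := hT.isAcyclic.not_reachable_deleteEdges hab hc
  have hbc_adj : (T.deleteEdges {s(a, b)} ⊔ edge b c).Adj b c :=
    .inr (by simpa [edge_adj] using fun h : b = c => hbc (h ▸ .rfl))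
  have hreach (x : V) : (T.deleteEdges {s(a, b)} ⊔ edge b c).Reachable x a := by
    rcases hT.connected.reachable_deleteEdges_left_or_right (a := a) (b := b) x with hx | hx
    · exact hx.mono le_sup_left
    · exact (hx.mono le_sup_left).trans (hbc_adj.reachable.trans (hc.mono le_sup_left))
  have : Nonempty V := ⟨a⟩
  refine ⟨Connected.mk fun x y => (hreach x).trans (hreach y).symm, ?_⟩
  exact (hT.isAcyclic.anti (deleteEdges_le _)).sup_edge_of_not_reachable hbc

end SimpleGraph

section MetricSpace

variable {V X : Type*} [MetricSpace X]

noncomputable def edgeLength (v : V → X) : Sym2 V → ℝ :=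
  Sym2.lift ⟨fun i j => dist (v i) (v j), fun _ _ => dist_comm _ _⟩

@[simp] lemma edgeLength_mk (v : V → X) (i j : V) : edgeLength v s(i, j) = dist (v i) (v j) := rfl

lemma edgeLength_nonneg (v : V → X) (e : Sym2 V) : 0 ≤ edgeLength v e := by
  induction e using Sym2.ind
  exact dist_nonneg

variable {n : ℕ} {v : Fin n → X} {T : SimpleGraph (Fin n)} {a b c d : Fin n}

lemma energy_eq_sum_edgeFinset [Fintype T.edgeSet] (α : ℝ) :
    energy v T α = ∑ e ∈ T.edgeFinset, edgeLength v e ^ α := by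
  rw [energy, Set.toFinite_toFinset]
  refine sum_congr rfl fun e _ => ?_
  induction e using Sym2.ind
  rfl

lemma energy_deleteEdges_sup_edge (hab : T.Adj a b) (hbc : b ≠ c)
    (hnadj : ¬ (T.deleteEdges {s(a, b)}).Adj b c) (α : ℝ) :
    energy v (T.deleteEdges {s(a, b)} ⊔ SimpleGraph.edge b c) α
      = energy v T α - dist (v a) (v b) ^ α + dist (v b) (v c) ^ α := by
  classical
  have hab' : {s(a, b)} ⊆ T.edgeFinset := by simpa using hab
  have hdel : (T.deleteEdges {s(a, b)}).edgeFinset = T.edgeFinset \ {s(a, b)} := by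
    ext; simp
  rw [energy_eq_sum_edgeFinset, energy_eq_sum_edgeFinset,
    SimpleGraph.edgeFinset_sup_edge _ hnadj hbc, sum_cons, hdel, sum_sdiff_eq_sub hab',
    sum_singleton]
  simp only [edgeLength_mk]
  ring

lemma IsMST.dist_le_of_reachable_deleteEdges (hT : IsMST v T) (hab : T.Adj a b)
    (hc : (T.deleteEdges {s(a, b)}).Reachable c a) :
    dist (v a) (v b) ≤ dist (v b) (v c) := by
  have hbc := hT.1.isAcyclic.not_reachable_deleteEdges hab hc
  have hle := hT.2 _ (hT.1.deleteEdges_sup_edge hab hc)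
  rw [energy_deleteEdges_sup_edge hab (fun h => hbc (h ▸ .rfl)) (fun h => hbc h.reachable),
    Real.rpow_one, Real.rpow_one] at hle
  linarith

lemma IsMST.exists_endpoint_dist_le (hT : IsMST v T) (hab : T.Adj a b) (hcd : T.Adj c d)
    (hne : s(c, d) ≠ s(a, b)) :
    ∃ w, (w = a ∨ w = b) ∧ dist (v a) (v b) ≤ dist (v w) (v c) ∧
      dist (v a) (v b) ≤ dist (v w) (v d) := by
  have hcd' : (T.deleteEdges {s(a, b)}).Adj c d := by simp [hcd, hne]
  have hba : T.deleteEdges {s(b, a)} = T.deleteEdges {s(a, b)} := by rw [Sym2.eq_swap]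
  rcases hT.1.connected.reachable_deleteEdges_left_or_right (a := a) (b := b) c with hc | hc
  · exact ⟨b, .inr rfl, hT.dist_le_of_reachable_deleteEdges hab hc,
      hT.dist_le_of_reachable_deleteEdges hab (hcd'.symm.reachable.trans hc)⟩
  · rw [← hba] at hc hcd'
    rw [dist_comm (v a)]
    exact ⟨a, .inl rfl, hT.dist_le_of_reachable_deleteEdges hab.symm hc,
      hT.dist_le_of_reachable_deleteEdges hab.symm (hcd'.symm.reachable.trans hc)⟩

end MetricSpace

section InnerProductSpace

variable {E : Type*} [NormedAddCommGroup E] [InnerProductSpace ℝ E]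

lemma three_mul_sq_le_four_mul_dist_midpoint_sq {w c d : E} {L : ℝ} (hc : L ≤ dist w c)
    (hd : L ≤ dist w d) (hcd : dist c d ≤ L) :
    3 * L ^ 2 ≤ 4 * dist w (midpoint ℝ c d) ^ 2 := by
  have hL : 0 ≤ L := dist_nonneg.trans hcd
  have := EuclideanGeometry.dist_sq_add_dist_sq_eq_two_mul_dist_midpoint_sq_add_half_dist_sq w c d
  nlinarith [mul_self_le_mul_self hL hc, mul_self_le_mul_self hL hd,
    mul_self_le_mul_self dist_nonneg hcd]

variable {V : Type*}

noncomputable def edgeMidpoint (v : V → E) : Sym2 V → E :=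
  Sym2.lift ⟨fun i j => midpoint ℝ (v i) (v j), fun _ _ => midpoint_comm _ _⟩

@[simp] lemma edgeMidpoint_mk (v : V → E) (i j : V) :
    edgeMidpoint v s(i, j) = midpoint ℝ (v i) (v j) := rfl

variable {n : ℕ} {v : Fin n → E} {T : SimpleGraph (Fin n)} {a b c d : Fin n}

/-- The endpoint `w` is `|ab| / 2` from the midpoint of `ab` and, by Apollonius, at least
`(√3 / 2) |ab| ≥ (5 / 6) |ab|` from that of `cd`. -/
lemma IsMST.dist_le_three_mul_dist_midpoint (hT : IsMST v T) (hab : T.Adj a b)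
    (hcd : T.Adj c d) (hne : s(c, d) ≠ s(a, b)) (hle : dist (v c) (v d) ≤ dist (v a) (v b)) :
    dist (v a) (v b) ≤ 3 * dist (midpoint ℝ (v a) (v b)) (midpoint ℝ (v c) (v d)) := by
  obtain ⟨w, hw, hwc, hwd⟩ := hT.exists_endpoint_dist_le hab hcd hne
  have hfar := three_mul_sq_le_four_mul_dist_midpoint_sq hwc hwd hle
  have hnear : dist (v w) (midpoint ℝ (v a) (v b)) = dist (v a) (v b) / 2 := by
    rcases hw with rfl | rfl
    · simp [dist_left_midpoint, div_eq_inv_mul]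
    · simp [dist_right_midpoint, div_eq_inv_mul]
  have htri := dist_triangle (v w) (midpoint ℝ (v a) (v b)) (midpoint ℝ (v c) (v d))
  nlinarith [dist_nonneg (x := v a) (y := v b),
    dist_nonneg (x := v w) (y := midpoint ℝ (v c) (v d))]

lemma IsMST.edgeLength_add_le_six_mul_dist_edgeMidpoint (hT : IsMST v T) {e f : Sym2 (Fin n)}
    (he : e ∈ T.edgeSet) (hf : f ∈ T.edgeSet) (hef : e ≠ f) :
    edgeLength v e + edgeLength v f ≤ 6 * dist (edgeMidpoint v e) (edgeMidpoint v f) := by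
  induction e using Sym2.ind with | h a b => ?_
  induction f using Sym2.ind with | h c d => ?_
  rw [SimpleGraph.mem_edgeSet] at he hf
  simp only [edgeLength_mk, edgeMidpoint_mk]
  rcases le_total (dist (v c) (v d)) (dist (v a) (v b)) with h | h
  · linarith [hT.dist_le_three_mul_dist_midpoint he hf hef.symm h]
  · rw [dist_comm (midpoint ℝ _ _)]
    linarith [hT.dist_le_three_mul_dist_midpoint hf he hef h]

end InnerProductSpace

section Cube

variable {ι : Type*} [Fintype ι]

lemma EuclideanSpace.dist_le_sqrt_card_mul_dist_ofLp (x y : EuclideanSpace ℝ ι) :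
    dist x y ≤ √(Fintype.card ι) * dist x.ofLp y.ofLp := by
  simpa [Real.sqrt_eq_rpow] using (PiLp.antilipschitzWith_ofLp 2 fun _ : ι => ℝ).le_mul_dist x y

lemma EuclideanSpace.dist_le_sqrt_card_of_mem_Icc {x y : EuclideanSpace ℝ ι}
    (hx : ∀ i, x i ∈ Set.Icc (0 : ℝ) 1) (hy : ∀ i, y i ∈ Set.Icc (0 : ℝ) 1) :
    dist x y ≤ √(Fintype.card ι) := by
  refine (dist_le_sqrt_card_mul_dist_ofLp x y).trans (mul_le_of_le_one_right (by positivity) ?_)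
  exact (dist_pi_le_iff zero_le_one).mpr fun i => Real.dist_le_of_mem_Icc_01 (hx i) (hy i)

lemma EuclideanSpace.midpoint_apply (p q : EuclideanSpace ℝ ι) (i : ι) :
    midpoint ℝ p q i = midpoint ℝ (p i) (q i) :=
  (EuclideanSpace.proj i : EuclideanSpace ℝ ι →L[ℝ] ℝ).toLinearMap.toAffineMap.map_midpoint p q

lemma edgeMidpoint_apply_mem_Icc {V : Type*} {v : V → EuclideanSpace ℝ ι}
    (hv : ∀ j i, v j i ∈ Set.Icc (0 : ℝ) 1) (e : Sym2 V) (i : ι) :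
    edgeMidpoint v e i ∈ Set.Icc (0 : ℝ) 1 := by
  induction e using Sym2.ind with | h a b => ?_
  rw [edgeMidpoint_mk, EuclideanSpace.midpoint_apply]
  exact (convex_Icc 0 1).midpoint_mem (hv a i) (hv b i)

lemma edgeLength_le_sqrt_card {V : Type*} {v : V → EuclideanSpace ℝ ι}
    (hv : ∀ j i, v j i ∈ Set.Icc (0 : ℝ) 1) (e : Sym2 V) : edgeLength v e ≤ √(Fintype.card ι) := by
  induction e using Sym2.ind with | h a b => ?_
  exact EuclideanSpace.dist_le_sqrt_card_of_mem_Icc (hv a) (hv b)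

lemma sum_two_mul_pow_card_le_of_add_le_dist [Nonempty ι] {κ : Type*} {s : Finset κ}
    {x : κ → ι → ℝ} {r : κ → ℝ} {ρ : ℝ} (hρ : 0 ≤ ρ)
    (hx : ∀ k ∈ s, ∀ i, x k i ∈ Set.Icc (0 : ℝ) 1) (hr : ∀ k ∈ s, r k ∈ Set.Icc 0 ρ)
    (hsep : (s : Set κ).Pairwise fun k l => r k + r l ≤ dist (x k) (x l)) :
    ∑ k ∈ s, (2 * r k) ^ Fintype.card ι ≤ (1 + 2 * ρ) ^ Fintype.card ι := by
  set c : ι → ℝ := fun _ => 1 / 2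
  have hball (k) (hk : k ∈ s) :
      volume (Metric.ball (x k) (r k)) = ENNReal.ofReal ((2 * r k) ^ Fintype.card ι) := by
    rcases (hr k hk).1.eq_or_lt with h | h
    · simp [← h, Fintype.card_ne_zero]
    · exact Real.volume_pi_ball _ h
  have hsub (k) (hk : k ∈ s) : Metric.ball (x k) (r k) ⊆ Metric.ball c (1 / 2 + ρ) := by
    have : dist (x k) c ≤ 1 / 2 := (dist_pi_le_iff (by norm_num)).mpr fun i => by
      rw [Real.dist_eq, abs_le]
      constructor <;> linarith [(hx k hk i).1, (hx k hk i).2]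
    exact Metric.ball_subset_ball' (by linarith [(hr k hk).2])
  have hdisj : (s : Set κ).PairwiseDisjoint fun k => Metric.ball (x k) (r k) :=
    fun k hk l hl hkl => Metric.ball_disjoint_ball (hsep hk hl hkl)
  have hvol :
      ∑ k ∈ s, volume (Metric.ball (x k) (r k)) ≤ volume (Metric.ball c (1 / 2 + ρ)) := by
    rw [← measure_biUnion_finset hdisj fun _ _ => Metric.isOpen_ball.measurableSet]
    exact measure_mono (Set.iUnion₂_subset hsub)
  rw [sum_congr rfl hball, ← ENNReal.ofReal_sum_of_nonneg fun k hk => by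
      have := (hr k hk).1; positivity,
    Real.volume_pi_ball c (by positivity), ENNReal.ofReal_le_ofReal_iff (by positivity)] at hvol
  convert hvol using 2
  ring

end Cube

theorem IsMST.sum_edgeLength_pow_card_le {ι : Type*} [Fintype ι] [Nonempty ι] {n : ℕ}
    {v : Fin n → EuclideanSpace ℝ ι} {T : SimpleGraph (Fin n)} [Fintype T.edgeSet]
    (hv : ∀ j i, v j i ∈ Set.Icc (0 : ℝ) 1) (hT : IsMST v T) :
    ∑ e ∈ T.edgeFinset, edgeLength v e ^ Fintype.card ι ≤
      (4 * √(Fintype.card ι)) ^ Fintype.card ι := by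
  set N := Fintype.card ι
  have hN : 0 < √(N : ℝ) := Real.sqrt_pos.mpr (mod_cast Fintype.card_pos)
  set r : Sym2 (Fin n) → ℝ := fun e => edgeLength v e / (6 * √N)
  have hpack : ∑ e ∈ T.edgeFinset, (2 * r e) ^ N ≤ (1 + 2 * (1 / 6)) ^ N := by
    refine sum_two_mul_pow_card_le_of_add_le_dist (x := fun e => (edgeMidpoint v e).ofLp)
      (by norm_num) (fun e _ => edgeMidpoint_apply_mem_Icc hv e) (fun e _ => ⟨?_, ?_⟩) ?_
    · have := edgeLength_nonneg v e
      positivity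
    · rw [div_le_iff₀ (by positivity)]
      linarith [edgeLength_le_sqrt_card hv e]
    · intro e he f hf hef
      have hsep := hT.edgeLength_add_le_six_mul_dist_edgeMidpoint (by simpa using he)
        (by simpa using hf) hef
      have hcmp := EuclideanSpace.dist_le_sqrt_card_mul_dist_ofLp (edgeMidpoint v e)
        (edgeMidpoint v f)
      simp only [r, ← add_div]
      rw [div_le_iff₀ (by positivity)]
      linarith
  calc ∑ e ∈ T.edgeFinset, edgeLength v e ^ N
      = (3 * √N) ^ N * ∑ e ∈ T.edgeFinset, (2 * r e) ^ N := by
        rw [mul_sum]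
        refine sum_congr rfl fun e _ => ?_
        rw [← mul_pow]
        congr 1
        simp only [r]
        field_simp
        ring
    _ ≤ (3 * √N) ^ N * (1 + 2 * (1 / 6)) ^ N := by gcongr
    _ = (4 * √N) ^ N := by
        rw [← mul_pow]
        ring_nf

/-- There is an absolute constant `C > 0` such that in every dimension `d ≥ 1`, for all
`n ≥ 1`, all points in the cube `[0,1]^d` and every minimal spanning tree `T` over
them, `E_d(T) ≤ (C * √d)^d`: the constant in the critical case `α = d` can be taken to
be `C(d) = C·√d` with `C` independent of the dimension. -/
theorem mst_energy_bound_critical_sqrt_d :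
    ∃ C : ℝ, 0 < C ∧ ∀ d : ℕ, 1 ≤ d → ∀ n : ℕ, 1 ≤ n →
      ∀ v : Fin n → EuclideanSpace ℝ (Fin d), (∀ j i, v j i ∈ Set.Icc (0:ℝ) 1) →
      ∀ T : SimpleGraph (Fin n), IsMST v T →
        energy v T (d : ℝ) ≤ (C * Real.sqrt d) ^ (d : ℝ) := by
  refine ⟨4, by norm_num, fun d hd n _ v hv T hT => ?_⟩
  classical
  have : Nonempty (Fin d) := ⟨⟨0, hd⟩⟩
  simpa [energy_eq_sum_edgeFinset, Real.rpow_natCast] using hT.sum_edgeLength_pow_card_le hv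
end

section
/- Let v_1, …, v_n ∈ ℝ^d and let T be a spanning tree over v_1, …, v_n minimizing E_1(T) = Σ_{{i,j} ∈ E(T)} ‖v_i − v_j‖. For every edge e = {i,j} of T, let B_e be the open ball of radius (1/10)·‖v_i − v_j‖ centered at the midpoint (v_i + v_j)/2. Then the balls {B_e : e ∈ E(T)} corresponding to distinct edges of T are pairwise disjoint. -/
/-!
Let `a = ‖v i - v j‖ ≥ b = ‖v k - v l‖`. Deleting `{i, j}` splits `T` into two components, and
the edge `{k, l}` lies in one of them; let `w` be the endpoint of `{i, j}` in the other one.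
Exchanging `{i, j}` for `{w, k}` or `{w, l}` gives another spanning tree, so minimality forces
`‖v w - v k‖ ≥ a` and `‖v w - v l‖ ≥ a`. By Apollonius, `v w` is then at distance at least
`(√3 / 2) a` from the midpoint of `{k, l}`, but only `a / 2` from the midpoint of `{i, j}`,
so the two midpoints are more than `a / 5 ≥ a / 10 + b / 10` apart.
-/

namespace SimpleGraph

variable {V : Type*} {G : SimpleGraph V}

theorem Walk.reachable_deleteEdges_or {x u : V} (p : G.Walk x u) (w : V) :
    (G.deleteEdges {s(u, w)}).Reachable x u ∨ (G.deleteEdges {s(u, w)}).Reachable x w := by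
  induction p with
  | nil => exact .inl .rfl
  | @cons a b c hab q ih =>
    by_cases he : s(a, b) = s(c, w)
    · rcases Sym2.eq_iff.mp he with ⟨rfl, rfl⟩ | ⟨rfl, rfl⟩
      · exact .inl .rfl
      · exact .inr .rfl
    · have hab' : (G.deleteEdges {s(c, w)}).Adj a b := deleteEdges_adj.mpr ⟨hab, he⟩
      exact ih.imp hab'.reachable.trans hab'.reachable.trans

theorem Connected.reachable_deleteEdges_or (hG : G.Connected) (x u w : V) :
    (G.deleteEdges {s(u, w)}).Reachable x u ∨ (G.deleteEdges {s(u, w)}).Reachable x w :=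
  (hG x u).elim (·.reachable_deleteEdges_or w)

theorem IsTree.not_reachable_deleteEdges {i j x : V} (hG : G.IsTree) (hij : G.Adj i j)
    (hxi : (G.deleteEdges {s(i, j)}).Reachable x i) :
    ¬ (G.deleteEdges {s(i, j)}).Reachable j x := fun hjx =>
  isBridge_iff.mp (isAcyclic_iff_forall_adj_isBridge.mp hG.isAcyclic hij) (hjx.trans hxi).symm

theorem IsTree.deleteEdges_sup_edge_s6 {i j x : V} (hG : G.IsTree) (hij : G.Adj i j)
    (hxi : (G.deleteEdges {s(i, j)}).Reachable x i) :
    (G.deleteEdges {s(i, j)} ⊔ edge j x).IsTree := by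
  set H := G.deleteEdges {s(i, j)}
  have hjx : ¬ H.Reachable j x := hG.not_reachable_deleteEdges hij hxi
  have hjx_adj : (H ⊔ edge j x).Adj j x :=
    (sup_adj ..).mpr <| .inr <| (edge_adj ..).mpr ⟨.inl ⟨rfl, rfl⟩, fun h => hjx (h ▸ .rfl)⟩
  refine ⟨(connected_iff_exists_forall_reachable _).mpr ⟨i, fun u => ?_⟩,
    (hG.isAcyclic.anti (deleteEdges_le _)).sup_edge_of_not_reachable hjx⟩
  rcases hG.connected.reachable_deleteEdges_or u i j with hu | hu
  · exact (hu.mono le_sup_left).symm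
  · exact ((hu.mono le_sup_left).trans (hjx_adj.reachable.trans (hxi.mono le_sup_left))).symm

end SimpleGraph

theorem energy_deleteEdges_sup_edge_s6 {X : Type*} [MetricSpace X] {n : ℕ} (v : Fin n → X)
    {G : SimpleGraph (Fin n)} {i j x : Fin n} (α : ℝ) (hij : G.Adj i j)
    (hjx : ¬ (G.deleteEdges {s(i, j)}).Adj j x) (hne : j ≠ x) :
    energy v (G.deleteEdges {s(i, j)} ⊔ SimpleGraph.edge j x) α + dist (v i) (v j) ^ α =
      energy v G α + dist (v j) (v x) ^ α := by
  classical
  have hset : (G.deleteEdges {s(i, j)} ⊔ SimpleGraph.edge j x).edgeSet.toFinite.toFinset =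
      insert s(j, x) (G.edgeSet.toFinite.toFinset.erase s(i, j)) := by
    ext e
    simp [SimpleGraph.edgeSet_sup, SimpleGraph.edgeSet_edge_of_ne hne, and_comm]
  have hjx' : s(j, x) ∉ G.edgeSet.toFinite.toFinset.erase s(i, j) := by
    simpa [and_comm] using hjx
  have hij' : s(i, j) ∈ G.edgeSet.toFinite.toFinset := by simpa using hij
  unfold energy
  rw [hset, Finset.sum_insert hjx', ← Finset.add_sum_erase _ _ hij']
  simp only [Sym2.lift_mk]
  ring

theorem IsMST.dist_le_of_reachable_deleteEdges_s6 {X : Type*} [MetricSpace X] {n : ℕ}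
    {v : Fin n → X} {T : SimpleGraph (Fin n)} (hT : IsMST v T) {i j x : Fin n}
    (hij : T.Adj i j) (hxi : (T.deleteEdges {s(i, j)}).Reachable x i) :
    dist (v i) (v j) ≤ dist (v j) (v x) := by
  have hjx : ¬ (T.deleteEdges {s(i, j)}).Reachable j x := hT.1.not_reachable_deleteEdges hij hxi
  have hswap := energy_deleteEdges_sup_edge_s6 v 1 hij (fun h => hjx h.reachable)
    (fun h => hjx (h ▸ .rfl))
  have hmin := hT.2 _ (hT.1.deleteEdges_sup_edge_s6 hij hxi)
  simp only [Real.rpow_one] at hswap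
  linarith

theorem IsMST.dist_edge_le_dist_endpoint {X : Type*} [MetricSpace X] {n : ℕ}
    {v : Fin n → X} {T : SimpleGraph (Fin n)} (hT : IsMST v T) {i j k l : Fin n}
    (hij : T.Adj i j) (hkl : T.Adj k l) (hne : s(i, j) ≠ s(k, l)) :
    (dist (v i) (v j) ≤ dist (v j) (v k) ∧ dist (v i) (v j) ≤ dist (v j) (v l)) ∨
      (dist (v i) (v j) ≤ dist (v i) (v k) ∧ dist (v i) (v j) ≤ dist (v i) (v l)) := by
  have hkl' : (T.deleteEdges {s(i, j)}).Adj k l := SimpleGraph.deleteEdges_adj.mpr ⟨hkl, hne.symm⟩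
  rcases hT.1.connected.reachable_deleteEdges_or k i j with hk | hk
  · exact .inl ⟨hT.dist_le_of_reachable_deleteEdges_s6 hij hk,
      hT.dist_le_of_reachable_deleteEdges_s6 hij (hkl'.symm.reachable.trans hk)⟩
  · rw [Sym2.eq_swap] at hk hkl'
    rw [dist_comm]
    exact .inr ⟨hT.dist_le_of_reachable_deleteEdges_s6 hij.symm hk,
      hT.dist_le_of_reachable_deleteEdges_s6 hij.symm (hkl'.symm.reachable.trans hk)⟩

namespace EuclideanGeometry

variable {V P : Type*} [NormedAddCommGroup V] [InnerProductSpace ℝ V] [MetricSpace P]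
  [NormedAddTorsor V P]

theorem three_mul_sq_le_four_mul_dist_midpoint_sq {w y z : P} {a : ℝ} (hy : a ≤ dist w y)
    (hz : a ≤ dist w z) (hyz : dist y z ≤ a) :
    3 * a ^ 2 ≤ 4 * dist w (midpoint ℝ y z) ^ 2 := by
  have ha : 0 ≤ a := dist_nonneg.trans hyz
  nlinarith [dist_sq_add_dist_sq_eq_two_mul_dist_midpoint_sq_add_half_dist_sq w y z,
    pow_le_pow_left₀ ha hy 2, pow_le_pow_left₀ ha hz 2, pow_le_pow_left₀ dist_nonneg hyz 2]

theorem disjoint_ball_midpoint_of_dist_le {w w' y z : P} (hy : dist w w' ≤ dist w y)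
    (hz : dist w w' ≤ dist w z) (hyz : dist y z ≤ dist w w') :
    Disjoint (Metric.ball (midpoint ℝ w w') (dist w w' / 10))
      (Metric.ball (midpoint ℝ y z) (dist y z / 10)) := by
  have hfar := three_mul_sq_le_four_mul_dist_midpoint_sq hy hz hyz
  have hw : dist w (midpoint ℝ w w') = dist w w' / 2 := by
    rw [dist_left_midpoint, Real.norm_two, inv_mul_eq_div]
  have hfar' : 7 * dist w w' / 10 ≤ dist w (midpoint ℝ y z) := by
    nlinarith [dist_nonneg (x := w) (y := w'), dist_nonneg (x := w) (y := midpoint ℝ y z)]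
  apply Metric.ball_disjoint_ball
  linarith [dist_triangle w (midpoint ℝ w w') (midpoint ℝ y z)]

end EuclideanGeometry

/-- Let `T` be a spanning tree over points `v 0, …, v (n-1)` of `ℝ^d` minimizing the
total edge length. For each edge `{i, j}` of `T`, consider the open ball of radius
one-tenth the edge length `‖v i - v j‖` centered at the midpoint `(v i + v j)/2`. Then
the balls corresponding to distinct edges are pairwise disjoint. -/
theorem mst_midpoint_balls_disjoint {d n : ℕ} (v : Fin n → EuclideanSpace ℝ (Fin d))
    (T : SimpleGraph (Fin n)) (hT : IsMST v T)
    (i j k l : Fin n) (hij : T.Adj i j) (hkl : T.Adj k l) (hne : s(i, j) ≠ s(k, l)) :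
    Disjoint (Metric.ball ((2:ℝ)⁻¹ • (v i + v j)) (dist (v i) (v j) / 10))
             (Metric.ball ((2:ℝ)⁻¹ • (v k + v l)) (dist (v k) (v l) / 10)) := by
  have hmid (x y : EuclideanSpace ℝ (Fin d)) : (2:ℝ)⁻¹ • (x + y) = midpoint ℝ x y := by
    rw [midpoint_eq_smul_add, invOf_eq_inv]
  simp only [hmid]
  wlog hlen : dist (v k) (v l) ≤ dist (v i) (v j) generalizing i j k l
  · exact (this k l i j hkl hij hne.symm (le_of_not_ge hlen)).symm
  rcases hT.dist_edge_le_dist_endpoint hij hkl hne with ⟨hk, hl⟩ | ⟨hk, hl⟩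
  · rw [dist_comm (v i) (v j)] at hk hl hlen ⊢
    rw [midpoint_comm]
    exact EuclideanGeometry.disjoint_ball_midpoint_of_dist_le hk hl hlen
  · exact EuclideanGeometry.disjoint_ball_midpoint_of_dist_le hk hl hlen
end
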